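/- Fix σ > 0 and finite measures λ, μ₀, μ₁ on a measurable space X, all of total mass V > 0. For a measurable equivalence φ : X → X define the divergence-metric matching functional E(φ) := σ · d_F(φ_*λ, λ)² + d_F(φ_*μ₀, μ₁)², where φ_* denotes pushforward of measures. If η₀ is a measurable equivalence of X with (η₀)_*λ = λ and (η₀)_*μ₀ = μ₀, and η₁ is a measurable equivalence of X with (η₁)_*λ = λ and (η₁)_*μ₁ = μ₁, then E(η₁ ∘ φ) = E(φ) = E(φ ∘ η₀) for every measurable equivalence φ. (This is the degeneracy Lemma for the inexact matching functional in Section 5.) -/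

import Mathlib

open MeasureTheory Real

/-- The Hellinger affinity (Bhattacharyya coefficient) of two finite measures,
computed with respect to the dominating measure `τ = μ + ν`. -/
noncomputable def hellingerAffinity {X : Type*} [MeasurableSpace X] (μ ν : Measure X) : ℝ :=
  ∫ x, Real.sqrt ((μ.rnDeriv (μ + ν) x).toReal * (ν.rnDeriv (μ + ν) x).toReal) ∂(μ + ν)

/-- The Fisher–Rao distance between two measures of equal total mass `V`. -/
noncomputable def fisherRaoDist {X : Type*} [MeasurableSpace X] (V : ℝ)
    (μ ν : Measure X) : ℝ :=
  Real.sqrt V * Real.arccos (hellingerAffinity μ ν / V)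

/-- The divergence-metric inexact matching functional
`E(φ) = σ·d_F(φ_*λ, λ)² + d_F(φ_*μ₀, μ₁)²`. -/
noncomputable def matchingFunctional {X : Type*} [MeasurableSpace X] (σ V : ℝ)
    (lam μ₀ μ₁ : Measure X) (φ : X ≃ᵐ X) : ℝ :=
  σ * (fisherRaoDist V (lam.map φ) lam) ^ 2 +
    (fisherRaoDist V (μ₀.map φ) μ₁) ^ 2

/-! Radon–Nikodym derivatives are transported along measurable embeddings, so the Fisher–Rao
distance is unchanged when both arguments are pushed forward by the same measurable equivalence.
Hence post-composing `φ` with `η₁` changes neither distance in `E`, since `η₁` fixes their second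
arguments `λ` and `μ₁`; pre-composing with `η₀` only replaces `λ` and `μ₀` by their pushforwards
under `η₀`, which are the same measures. -/

section

variable {X Y : Type*} [MeasurableSpace X] [MeasurableSpace Y] {f : X → Y}

theorem MeasurableEmbedding.hellingerAffinity_map (hf : MeasurableEmbedding f)
    (μ ν : Measure X) [SigmaFinite μ] [SigmaFinite ν] :
    hellingerAffinity (μ.map f) (ν.map f) = hellingerAffinity μ ν := by
  rw [hellingerAffinity, hellingerAffinity, ← Measure.map_add _ _ hf.measurable,
    hf.integral_map]
  refine integral_congr_ae ?_
  filter_upwards [hf.rnDeriv_map μ (μ + ν), hf.rnDeriv_map ν (μ + ν)] with x hμ hν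
  rw [hμ, hν]

theorem MeasurableEmbedding.fisherRaoDist_map (hf : MeasurableEmbedding f) (V : ℝ)
    (μ ν : Measure X) [SigmaFinite μ] [SigmaFinite ν] :
    fisherRaoDist V (μ.map f) (ν.map f) = fisherRaoDist V μ ν := by
  rw [fisherRaoDist, fisherRaoDist, hf.hellingerAffinity_map]

end

theorem MeasureTheory.Measure.map_measurableEquiv_trans {X : Type*} [MeasurableSpace X]
    (μ : Measure X) (e e' : X ≃ᵐ X) : μ.map (e.trans e') = (μ.map e).map e' := by
  rw [MeasurableEquiv.coe_trans, Measure.map_map e'.measurable e.measurable]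

section

variable {X : Type*} [MeasurableSpace X] (σ V : ℝ) {lam μ₀ μ₁ : Measure X} {η : X ≃ᵐ X}

theorem matchingFunctional_trans_of_map_eq_right
    [SigmaFinite lam] [SigmaFinite μ₀] [SigmaFinite μ₁]
    (hlam : lam.map η = lam) (hμ₁ : μ₁.map η = μ₁) (φ : X ≃ᵐ X) :
    matchingFunctional σ V lam μ₀ μ₁ (φ.trans η) = matchingFunctional σ V lam μ₀ μ₁ φ := by
  have hdist : ∀ ρ ρ' : Measure X, [SigmaFinite ρ] → [SigmaFinite ρ'] → ρ'.map η = ρ' →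
      fisherRaoDist V (ρ.map (φ.trans η)) ρ' = fisherRaoDist V (ρ.map φ) ρ' := by
    intro ρ ρ' _ _ hρ'
    have := φ.sigmaFinite_map (μ := ρ)
    conv_lhs => rw [Measure.map_measurableEquiv_trans, ← hρ']
    exact η.measurableEmbedding.fisherRaoDist_map V _ _
  rw [matchingFunctional, matchingFunctional, hdist lam lam hlam, hdist μ₀ μ₁ hμ₁]

theorem matchingFunctional_trans_of_map_eq_left (hlam : lam.map η = lam) (hμ₀ : μ₀.map η = μ₀)
    (φ : X ≃ᵐ X) :
    matchingFunctional σ V lam μ₀ μ₁ (η.trans φ) = matchingFunctional σ V lam μ₀ μ₁ φ := by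
  rw [matchingFunctional, matchingFunctional, Measure.map_measurableEquiv_trans,
    Measure.map_measurableEquiv_trans, hlam, hμ₀]

end

theorem matchingFunctional_degeneracy_general
    {X : Type*} [MeasurableSpace X] (σ V : ℝ)
    (lam μ₀ μ₁ : Measure X)
    [IsFiniteMeasure lam] [IsFiniteMeasure μ₀] [IsFiniteMeasure μ₁]
    (η₀ η₁ : X ≃ᵐ X)
    (hη₀lam : lam.map η₀ = lam) (hη₀μ₀ : μ₀.map η₀ = μ₀)
    (hη₁lam : lam.map η₁ = lam) (hη₁μ₁ : μ₁.map η₁ = μ₁) :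
    ∀ φ : X ≃ᵐ X,
      matchingFunctional σ V lam μ₀ μ₁ (φ.trans η₁) = matchingFunctional σ V lam μ₀ μ₁ φ ∧
      matchingFunctional σ V lam μ₀ μ₁ φ = matchingFunctional σ V lam μ₀ μ₁ (η₀.trans φ) :=
  fun φ => ⟨matchingFunctional_trans_of_map_eq_right σ V hη₁lam hη₁μ₁ φ,
    (matchingFunctional_trans_of_map_eq_left σ V hη₀lam hη₀μ₀ φ).symm⟩

/-- **Degeneracy of the inexact matching functional** (Lemma in Section 5):
`E(η₁ ∘ φ) = E(φ) = E(φ ∘ η₀)` whenever `η₀` preserves `λ` and `μ₀`, and `η₁`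
preserves `λ` and `μ₁`. -/
theorem matchingFunctional_degeneracy
    {X : Type*} [MeasurableSpace X] (σ V : ℝ) (hσ : 0 < σ) (hV : 0 < V)
    (lam μ₀ μ₁ : Measure X)
    [IsFiniteMeasure lam] [IsFiniteMeasure μ₀] [IsFiniteMeasure μ₁]
    (hlam : (lam Set.univ).toReal = V) (hμ₀ : (μ₀ Set.univ).toReal = V)
    (hμ₁ : (μ₁ Set.univ).toReal = V)
    (η₀ η₁ : X ≃ᵐ X)
    (hη₀lam : lam.map η₀ = lam) (hη₀μ₀ : μ₀.map η₀ = μ₀)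
    (hη₁lam : lam.map η₁ = lam) (hη₁μ₁ : μ₁.map η₁ = μ₁) :
    ∀ φ : X ≃ᵐ X,
      matchingFunctional σ V lam μ₀ μ₁ (φ.trans η₁) = matchingFunctional σ V lam μ₀ μ₁ φ ∧
      matchingFunctional σ V lam μ₀ μ₁ φ = matchingFunctional σ V lam μ₀ μ₁ (η₀.trans φ) :=
  matchingFunctional_degeneracy_general σ V lam μ₀ μ₁ η₀ η₁ hη₀lam hη₀μ₀ hη₁lam hη₁μ₁
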